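/- Invariants of the S¹-reduced homogeneous Chaplygin sphere: let c ≠ 0 and ω₃ ∈ ℝ, and let γ, a : ℝ → ℝ³ be differentiable solutions of γ̇(t) = a(t)/c, ȧ(t) = ω₃ a(t) × γ(t) − (‖a(t)‖²/c) γ(t), with ⟨γ(0), γ(0)⟩ = 1 and ⟨a(0), γ(0)⟩ = 0. Then for all t: ⟨γ(t), γ(t)⟩ = 1, ⟨a(t), γ(t)⟩ = 0, and ‖a(t)‖ = ‖a(0)‖. Thus on each level set of ‖a‖ the reduced system is an isotropic oscillator with a Lorentz-type force. -/

import Mathlib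

open Matrix

/-- Euclidean inner product on ℝ³. -/
def dot3 (u v : Fin 3 → ℝ) : ℝ := u 0 * v 0 + u 1 * v 1 + u 2 * v 2

/-- Cross product on ℝ³. -/
def cross3 (u v : Fin 3 → ℝ) : Fin 3 → ℝ :=
  ![u 1 * v 2 - u 2 * v 1, u 2 * v 0 - u 0 * v 2, u 0 * v 1 - u 1 * v 0]

/-!
With `p = ⟨γ, γ⟩`, `g = ⟨a, γ⟩`, `h = ⟨a, a⟩`, the equations of motion give
`p' = 2g/c`, `g' = h(1 - p)/c`, `h' = -2hg/c`, because `a × γ` is orthogonal to `a` and `γ`.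
Hence `h eᵖ` and `hp - g²` are first integrals, and with the initial data
`g² eᵖ = h(0) (e p - eᵖ) ≤ 0` since `eᵖ ≥ e p`. So `g ≡ 0`, after which `p' = h' = 0`.
-/

open Real

theorem dot3_eq_dotProduct (u v : Fin 3 → ℝ) : dot3 u v = u ⬝ᵥ v :=
  (vec3_dotProduct u v).symm

theorem cross3_eq_crossProduct (u v : Fin 3 → ℝ) : cross3 u v = u ⨯₃ v := rfl

theorem dot3_self_nonneg (u : Fin 3 → ℝ) : 0 ≤ dot3 u u :=
  add_nonneg (add_nonneg (mul_self_nonneg _) (mul_self_nonneg _)) (mul_self_nonneg _)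

theorem HasDerivAt.dot3 {u v : ℝ → Fin 3 → ℝ} {u' v' : Fin 3 → ℝ} {t : ℝ}
    (hu : HasDerivAt u u' t) (hv : HasDerivAt v v' t) :
    HasDerivAt (fun s ↦ dot3 (u s) (v s)) (dot3 u' (v t) + dot3 (u t) v') t := by
  have hui := hasDerivAt_pi.1 hu
  have hvi := hasDerivAt_pi.1 hv
  refine ((((hui 0).mul (hvi 0)).add ((hui 1).mul (hvi 1))).add
    ((hui 2).mul (hvi 2))).congr_deriv ?_
  simp only [_root_.dot3]
  ring

theorem eq_of_hasDerivAt_zero {E : Type*} [NormedAddCommGroup E] [NormedSpace ℝ E]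
    {f : ℝ → E} (hf : ∀ t, HasDerivAt f 0 t) (x y : ℝ) : f x = f y :=
  is_const_of_deriv_eq_zero (fun t ↦ (hf t).differentiableAt) (fun t ↦ (hf t).deriv) x y

structure IsReducedSphereSolution (c ω₃ : ℝ) (γ a : ℝ → Fin 3 → ℝ) : Prop where
  hasDerivAt_γ : ∀ t, HasDerivAt γ (c⁻¹ • a t) t
  hasDerivAt_a : ∀ t, HasDerivAt a (ω₃ • cross3 (a t) (γ t) - (dot3 (a t) (a t) / c) • γ t) t

namespace IsReducedSphereSolution

variable {c ω₃ : ℝ} {γ a : ℝ → Fin 3 → ℝ}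

theorem hasDerivAt_dot3_γ_γ (hs : IsReducedSphereSolution c ω₃ γ a) (t : ℝ) :
    HasDerivAt (fun s ↦ dot3 (γ s) (γ s)) (2 * c⁻¹ * dot3 (a t) (γ t)) t := by
  refine ((hs.hasDerivAt_γ t).dot3 (hs.hasDerivAt_γ t)).congr_deriv ?_
  rw [dot3_eq_dotProduct, dot3_eq_dotProduct, dot3_eq_dotProduct, dotProduct_comm (γ t)]
  simp only [smul_dotProduct, smul_eq_mul]
  ring

theorem hasDerivAt_dot3_a_γ (hs : IsReducedSphereSolution c ω₃ γ a) (t : ℝ) :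
    HasDerivAt (fun s ↦ dot3 (a s) (γ s))
      (c⁻¹ * dot3 (a t) (a t) * (1 - dot3 (γ t) (γ t))) t := by
  refine ((hs.hasDerivAt_a t).dot3 (hs.hasDerivAt_γ t)).congr_deriv ?_
  simp only [dot3_eq_dotProduct, cross3_eq_crossProduct, sub_dotProduct, smul_dotProduct,
    dotProduct_smul, smul_eq_mul]
  rw [dotProduct_comm (a t ⨯₃ γ t), dot_cross_self]
  ring

theorem hasDerivAt_dot3_a_a (hs : IsReducedSphereSolution c ω₃ γ a) (t : ℝ) :
    HasDerivAt (fun s ↦ dot3 (a s) (a s))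
      (-2 * c⁻¹ * dot3 (a t) (a t) * dot3 (a t) (γ t)) t := by
  refine ((hs.hasDerivAt_a t).dot3 (hs.hasDerivAt_a t)).congr_deriv ?_
  simp only [dot3_eq_dotProduct, cross3_eq_crossProduct, sub_dotProduct, dotProduct_sub,
    smul_dotProduct, dotProduct_smul, smul_eq_mul]
  rw [dotProduct_comm (a t ⨯₃ γ t), dot_self_cross, dotProduct_comm (γ t)]
  ring

theorem hasDerivAt_dot3_a_a_mul_exp_dot3_γ_γ (hs : IsReducedSphereSolution c ω₃ γ a) (t : ℝ) :
    HasDerivAt (fun s ↦ dot3 (a s) (a s) * exp (dot3 (γ s) (γ s))) 0 t := by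
  refine ((hs.hasDerivAt_dot3_a_a t).mul (hs.hasDerivAt_dot3_γ_γ t).exp).congr_deriv ?_
  ring

-- `dot3 a a * dot3 γ γ - dot3 a γ ^ 2 = ‖a × γ‖²` by Lagrange's identity.
theorem hasDerivAt_dot3_a_a_mul_dot3_γ_γ_sub_sq (hs : IsReducedSphereSolution c ω₃ γ a)
    (t : ℝ) :
    HasDerivAt (fun s ↦ dot3 (a s) (a s) * dot3 (γ s) (γ s) - dot3 (a s) (γ s) ^ 2) 0 t := by
  refine (((hs.hasDerivAt_dot3_a_a t).mul (hs.hasDerivAt_dot3_γ_γ t)).sub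
    ((hs.hasDerivAt_dot3_a_γ t).pow 2)).congr_deriv ?_
  ring

theorem dot3_a_γ_eq_zero (hs : IsReducedSphereSolution c ω₃ γ a)
    (hγ0 : dot3 (γ 0) (γ 0) = 1) (ha0 : dot3 (a 0) (γ 0) = 0) (t : ℝ) :
    dot3 (a t) (γ t) = 0 := by
  have hW := eq_of_hasDerivAt_zero hs.hasDerivAt_dot3_a_a_mul_exp_dot3_γ_γ t 0
  have hQ := eq_of_hasDerivAt_zero hs.hasDerivAt_dot3_a_a_mul_dot3_γ_γ_sub_sq t 0
  simp only [hγ0, ha0] at hW hQ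
  set g := dot3 (a t) (γ t)
  set p := dot3 (γ t) (γ t)
  have hg : g ^ 2 * exp p = dot3 (a 0) (a 0) * (exp 1 * p - exp p) := by
    linear_combination (-exp p) * hQ + p * hW
  have hg_nonpos : g ^ 2 * exp p ≤ 0 :=
    hg ▸ mul_nonpos_of_nonneg_of_nonpos (dot3_self_nonneg _)
      (sub_nonpos.2 exp_one_mul_le_exp)
  exact pow_eq_zero_iff two_ne_zero |>.1 <|
    le_antisymm (nonpos_of_mul_nonpos_left hg_nonpos (exp_pos p)) (sq_nonneg g)

end IsReducedSphereSolution

theorem reduced_homogeneous_sphere_invariants_general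
    (c ω₃ : ℝ)
    (γ a : ℝ → Fin 3 → ℝ)
    (hγ : ∀ t, HasDerivAt γ (c⁻¹ • a t) t)
    (ha : ∀ t, HasDerivAt a
        (ω₃ • cross3 (a t) (γ t) - (dot3 (a t) (a t) / c) • γ t) t)
    (hγ0 : dot3 (γ 0) (γ 0) = 1) (ha0 : dot3 (a 0) (γ 0) = 0) :
    (∀ t, dot3 (γ t) (γ t) = 1) ∧
    (∀ t, dot3 (a t) (γ t) = 0) ∧
    (∀ t, dot3 (a t) (a t) = dot3 (a 0) (a 0)) := by
  have hs : IsReducedSphereSolution c ω₃ γ a := ⟨hγ, ha⟩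
  have hag := hs.dot3_a_γ_eq_zero hγ0 ha0
  refine ⟨fun t ↦ ?_, hag, fun t ↦ ?_⟩
  · rw [← hγ0]
    exact eq_of_hasDerivAt_zero (fun s ↦ by simpa [hag s] using hs.hasDerivAt_dot3_γ_γ s) t 0
  · exact eq_of_hasDerivAt_zero (fun s ↦ by simpa [hag s] using hs.hasDerivAt_dot3_a_a s) t 0

/-- **Invariants of the S¹-reduced homogeneous Chaplygin sphere.**  For `c ≠ 0`,
differentiable solutions of `γ̇ = a/c`, `ȧ = ω₃ a × γ − (‖a‖²/c)γ` with
`⟨γ(0),γ(0)⟩ = 1` and `⟨a(0),γ(0)⟩ = 0` satisfy, for all `t`: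
`⟨γ(t),γ(t)⟩ = 1`, `⟨a(t),γ(t)⟩ = 0`, and `‖a(t)‖² = ‖a(0)‖²` (so `‖a‖` is
conserved): an isotropic oscillator with a Lorentz-type force on each level set. -/
theorem reduced_homogeneous_sphere_invariants
    (c ω₃ : ℝ) (hc : c ≠ 0)
    (γ a : ℝ → Fin 3 → ℝ)
    (hγ : ∀ t, HasDerivAt γ (c⁻¹ • a t) t)
    (ha : ∀ t, HasDerivAt a
        (ω₃ • cross3 (a t) (γ t) - (dot3 (a t) (a t) / c) • γ t) t)
    (hγ0 : dot3 (γ 0) (γ 0) = 1) (ha0 : dot3 (a 0) (γ 0) = 0) :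
    (∀ t, dot3 (γ t) (γ t) = 1) ∧
    (∀ t, dot3 (a t) (γ t) = 0) ∧
    (∀ t, dot3 (a t) (a t) = dot3 (a 0) (a 0)) :=
  reduced_homogeneous_sphere_invariants_general c ω₃ γ a hγ ha hγ0 ha0
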